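/- Let k be a field of characteristic zero and n ∈ ℕ. Let M = Λ(k^n) ⊗_k k[X₁,…,Xₙ], the tensor product of the exterior algebra of k^n with the polynomial ring in n variables, and let d : M → M be the k-linear map determined by d(ω ⊗ f) = Σᵢ (eᵢ ∧ ω) ⊗ (Xᵢ·f), where eᵢ are the images of the standard basis vectors. Then: (1) d ∘ d = 0; (2) the element τ = (e₁ ∧ ⋯ ∧ eₙ) ⊗ 1 lies in the kernel of d; (3) τ does not lie in the range of d; and (4) the kernel of d is the internal direct sum of the range of d and the line k·τ. In particular the cohomology ker(d)/im(d) is one-dimensional. -/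

import Mathlib

/-!
The contraction `h = ∑ᵢ ι_{eᵢ} ⊗ ∂/∂Xᵢ` is a homotopy for `d`: `dh + hd = n + E - N`, where
`E` and `N` are the polynomial and exterior degree operators, so `dh + hd` acts on `Λᵖ ⊗ Symᵠ`
by the scalar `n + q - p`. Since `dh + hd` commutes with `d`, the eigencomponents of a cocycle
are again cocycles, and a cocycle `x` with eigenvalue `μ ≠ 0` is the coboundary
`d (μ⁻¹ • h x)`. In characteristic zero the eigenvalue vanishes only on
`Λⁿ ⊗ Sym⁰ = k ∙ τ`. Finally `τ` is not a coboundary: the coefficient of `e₁ ∧ ⋯ ∧ eₙ` at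
`X = 0` is `1` on `τ` and vanishes on the image of `d`, every term of which has a factor `Xᵢ`.
-/

open TensorProduct

/-- The element `τ = (e₁ ∧ ⋯ ∧ eₙ) ⊗ 1` of `Λ(kⁿ) ⊗ k[X₁,…,Xₙ]`. -/
noncomputable def koszulTau (k : Type*) [Field k] (n : ℕ) :
    ExteriorAlgebra k (Fin n → k) ⊗[k] MvPolynomial (Fin n) k :=
  (List.ofFn fun i : Fin n => ExteriorAlgebra.ι k (Pi.single i (1 : k))).prod ⊗ₜ 1

open Module.End MvPolynomial

theorem Fintype.sum_sum_eq_zero_of_antisymm {ι M : Type*} [Fintype ι] [AddCommGroup M]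
    {f : ι → ι → M} (hdiag : ∀ i, f i i = 0) (hf : ∀ i j, f j i = -f i j) :
    ∑ i, ∑ j, f i j = 0 := by
  rw [← Fintype.sum_prod_type']
  refine Finset.sum_ninvolution Prod.swap (fun p => by simp [hf p.1 p.2])
    (fun p hp hswap => hp ?_) (fun _ => Finset.mem_univ _) Prod.swap_swap
  rw [Prod.swap_eq_iff_eq_swap, Prod.ext_iff] at hswap
  obtain ⟨i, j⟩ := p
  obtain rfl : i = j := hswap.1
  exact hdiag i

section Homotopy

variable {k V : Type*} [Field k] [AddCommGroup V] [Module k V]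

theorem LinearMap.mem_range_of_mem_eigenspace_homotopy {d h : V →ₗ[k] V} {μ : k}
    (hμ : μ ≠ 0) {x : V} (hx : x ∈ eigenspace (d ∘ₗ h + h ∘ₗ d) μ) (hdx : d x = 0) :
    x ∈ LinearMap.range d := by
  rw [mem_eigenspace_iff] at hx
  refine ⟨μ⁻¹ • h x, ?_⟩
  have hdh : d (h x) = μ • x := by simpa [hdx] using hx
  rw [map_smul, hdh, inv_smul_smul₀ hμ]

theorem LinearMap.ker_le_range_sup_of_homotopy {ι : Type*} {d h : V →ₗ[k] V}
    (hdd : d ∘ₗ d = 0) {W : ι → Submodule k V} (hW : iSup W = ⊤) (c : ι → k)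
    (hWc : ∀ i, W i ≤ eigenspace (d ∘ₗ h + h ∘ₗ d) (c i)) :
    LinearMap.ker d ≤ LinearMap.range d ⊔ ⨆ (i) (_ : c i = 0), W i := by
  set G := d ∘ₗ h + h ∘ₗ d
  set U : k → Submodule k V := fun μ => ⨆ (i) (_ : c i = μ), W i
  have hdG : ∀ x, d (G x) = G (d x) := fun x => by
    have hdd' : ∀ y, d (d y) = 0 := LinearMap.congr_fun hdd
    simp [G, hdd']
  have hUG : ∀ μ, U μ ≤ eigenspace G μ := fun μ => iSup₂_le fun i hi => hi ▸ hWc i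
  have hU : iSup U = ⊤ := by
    rw [← hW, iSup_comm]
    exact iSup_congr fun i => iSup_iSup_eq_right
  intro x hx
  obtain ⟨F, hFU, rfl⟩ :=
    (Submodule.mem_iSup_iff_exists_finsupp U x).1 (hU ▸ Submodule.mem_top)
  have hdF : ∀ μ ∈ F.support, d (F μ) = 0 := by
    refine (iSupIndep_iff_finsetSum_eq_zero_imp_eq_zero _).1 (eigenspaces_iSupIndep G)
      F.support (fun μ => d (F μ)) (fun μ _ => ?_) ?_
    · have hGF := mem_eigenspace_iff.1 (hUG μ (hFU μ))
      rw [mem_eigenspace_iff, ← hdG, hGF, map_smul]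
    · rw [← map_sum]
      exact hx
  refine Submodule.sum_mem _ fun μ hμF => ?_
  obtain rfl | hμ := eq_or_ne μ 0
  · exact Submodule.mem_sup_right (hFU 0)
  · exact Submodule.mem_sup_left
      (LinearMap.mem_range_of_mem_eigenspace_homotopy hμ (hUG μ (hFU μ)) (hdF μ hμF))

end Homotopy

namespace ExteriorAlgebra

section Contraction

variable {R M : Type*} [CommRing R] [AddCommGroup M] [Module R M]

theorem ι_mul_ι_anticomm (v w : M) : ι R v * ι R w = -(ι R w * ι R v) :=
  eq_neg_of_add_eq_zero_left (ι_add_mul_swap v w)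

/- `CliffordAlgebra.contractLeft` with its type stated in terms of `ExteriorAlgebra`, so that
tensor products built from it are syntactically over `ExteriorAlgebra R M`. -/
noncomputable def contractLeft (φ : Module.Dual R M) :
    ExteriorAlgebra R M →ₗ[R] ExteriorAlgebra R M :=
  CliffordAlgebra.contractLeft φ

theorem contractLeft_ι_mul (φ : Module.Dual R M) (v : M) (x : ExteriorAlgebra R M) :
    contractLeft φ (ι R v * x) = φ v • x - ι R v * contractLeft φ x :=
  CliffordAlgebra.contractLeft_ι_mul _ _ _

theorem contractLeft_algebraMap (φ : Module.Dual R M) (r : R) :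
    contractLeft φ (algebraMap R (ExteriorAlgebra R M) r) = 0 :=
  CliffordAlgebra.contractLeft_algebraMap _ φ r

end Contraction

section NumberOperator

variable {R σ : Type*} [CommRing R] [Fintype σ] [DecidableEq σ]

theorem sum_smul_ι_single (v : σ → R) : ∑ i, v i • ι R (Pi.single i (1 : R)) = ι R v := by
  simp_rw [← map_smul, ← map_sum, ← pi_eq_sum_univ']

variable (R σ) in
noncomputable def numberOperator :
    ExteriorAlgebra R (σ → R) →ₗ[R] ExteriorAlgebra R (σ → R) :=
  ∑ i, LinearMap.mulLeft R (ι R (Pi.single i 1)) ∘ₗ contractLeft (LinearMap.proj i)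

theorem numberOperator_apply (x : ExteriorAlgebra R (σ → R)) :
    numberOperator R σ x = ∑ i, ι R (Pi.single i 1) * contractLeft (LinearMap.proj i) x := by
  simp [numberOperator, LinearMap.sum_apply]

theorem numberOperator_ι_mul (v : σ → R) (x : ExteriorAlgebra R (σ → R)) :
    numberOperator R σ (ι R v * x) = ι R v * x + ι R v * numberOperator R σ x := by
  have hswap : ∀ i, ι R (Pi.single i 1) * (ι R v * contractLeft (LinearMap.proj i) x)
      = -(ι R v * (ι R (Pi.single i 1) * contractLeft (LinearMap.proj i) x)) := fun i => by
    rw [← mul_assoc, ι_mul_ι_anticomm, neg_mul, mul_assoc]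
  simp_rw [numberOperator_apply, contractLeft_ι_mul, mul_sub, hswap, sub_neg_eq_add,
    Finset.sum_add_distrib, ← Finset.mul_sum, mul_smul_comm, ← smul_mul_assoc,
    ← Finset.sum_mul, sum_smul_ι_single]
  rfl

theorem numberOperator_of_mem_exteriorPower {p : ℕ} {x : ExteriorAlgebra R (σ → R)}
    (hx : x ∈ ⋀[R]^p (σ → R)) : numberOperator R σ x = p • x := by
  induction hx using Submodule.pow_induction_on_left' with
  | algebraMap r =>
    rw [zero_smul, numberOperator_apply]
    exact Finset.sum_eq_zero fun i _ => by rw [contractLeft_algebraMap, mul_zero]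
  | add x y i _ _ hx hy => rw [map_add, hx, hy, smul_add]
  | mem_mul m hm i x _ hx =>
    obtain ⟨v, rfl⟩ := hm
    rw [numberOperator_ι_mul, hx, mul_smul_comm, succ_nsmul', add_comm]

end NumberOperator

theorem exteriorPower_eq_bot_of_finrank_lt {K E : Type*} [Field K] [AddCommGroup E] [Module K E]
    [FiniteDimensional K E] {p : ℕ} (hp : Module.finrank K E < p) : ⋀[K]^p E = ⊥ := by
  rw [← Submodule.finrank_eq_zero, exteriorPower.finrank_eq, Nat.choose_eq_zero_of_lt hp]

section Volume

variable (R : Type*) [CommRing R] (n : ℕ)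

noncomputable def volumeForm : ExteriorAlgebra R (Fin n → R) :=
  ιMulti R n fun i => Pi.single i 1

noncomputable def volumeCoeff : ExteriorAlgebra R (Fin n → R) →ₗ[R] R :=
  liftAlternating (Pi.single n Matrix.detRowAlternating)

theorem volumeCoeff_volumeForm : volumeCoeff R n (volumeForm R n) = 1 := by
  rw [volumeCoeff, volumeForm, liftAlternating_apply_ιMulti, Pi.single_eq_same]
  have hone : Matrix.of (fun i => Pi.single i 1 : Fin n → Fin n → R) = 1 := by
    ext i j
    simp [Matrix.one_apply, Pi.single_apply, eq_comm]
  exact (congrArg Matrix.det hone).trans Matrix.det_one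

theorem volumeForm_ne_zero [Nontrivial R] : volumeForm R n ≠ 0 := fun h => by
  simpa [h] using volumeCoeff_volumeForm R n

theorem exteriorPower_top_eq_span_volumeForm (k : Type*) [Field k] :
    ⋀[k]^n (Fin n → k) = k ∙ volumeForm k n := by
  refine (Submodule.eq_of_le_of_finrank_le ?_ ?_).symm
  · rw [Submodule.span_singleton_le_iff_mem]
    exact ιMulti_range k n ⟨_, rfl⟩
  · rw [exteriorPower.finrank_eq, Module.finrank_fin_fun, Nat.choose_self,
      finrank_span_singleton (volumeForm_ne_zero k n)]

end Volume

end ExteriorAlgebra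

open ExteriorAlgebra

section Koszul

variable {R σ : Type*} [CommRing R]

variable (R σ) in
noncomputable def koszulSummand (p q : ℕ) :
    Submodule R (ExteriorAlgebra R (σ → R) ⊗[R] MvPolynomial σ R) :=
  Submodule.map₂ (TensorProduct.mk R _ _) (⋀[R]^p (σ → R)) (homogeneousSubmodule σ R q)

theorem iSup_koszulSummand : ⨆ pq : ℕ × ℕ, koszulSummand R σ pq.1 pq.2 = ⊤ := by
  have hΛ : ⨆ p, ⋀[R]^p (σ → R) = ⊤ :=
    (DirectSum.Decomposition.isInternal _).submodule_iSup_eq_top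
  have hS : ⨆ q, homogeneousSubmodule σ R q = ⊤ := by
    let := MvPolynomial.decomposition (σ := σ) (R := R)
    exact (DirectSum.Decomposition.isInternal _).submodule_iSup_eq_top
  simp_rw [iSup_prod, koszulSummand, ← Submodule.map₂_iSup_right,
    ← Submodule.map₂_iSup_left, hΛ, hS, map₂_mk_top_top_eq_top]

variable [Fintype σ]

variable (R σ) in
noncomputable def koszulHomotopy :
    ExteriorAlgebra R (σ → R) ⊗[R] MvPolynomial σ R →ₗ[R]
      ExteriorAlgebra R (σ → R) ⊗[R] MvPolynomial σ R :=
  ∑ i, TensorProduct.map (contractLeft (LinearMap.proj i)) (pderiv i).toLinearMap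

theorem koszulHomotopy_tmul (ω : ExteriorAlgebra R (σ → R)) (f : MvPolynomial σ R) :
    koszulHomotopy R σ (ω ⊗ₜ f) =
      ∑ i, contractLeft (LinearMap.proj i) ω ⊗ₜ pderiv i f := by
  simp [koszulHomotopy, LinearMap.sum_apply]

variable [DecidableEq σ]

variable (R σ) in
noncomputable def koszulDifferential :
    ExteriorAlgebra R (σ → R) ⊗[R] MvPolynomial σ R →ₗ[R]
      ExteriorAlgebra R (σ → R) ⊗[R] MvPolynomial σ R :=
  ∑ i, TensorProduct.map (LinearMap.mulLeft R (ι R (Pi.single i 1))) (LinearMap.mulLeft R (X i))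

theorem koszulDifferential_tmul (ω : ExteriorAlgebra R (σ → R)) (f : MvPolynomial σ R) :
    koszulDifferential R σ (ω ⊗ₜ f) =
      ∑ i, (ι R (Pi.single i 1) * ω) ⊗ₜ (X i * f) := by
  simp [koszulDifferential, LinearMap.sum_apply]

theorem koszulDifferential_comp_self :
    koszulDifferential R σ ∘ₗ koszulDifferential R σ = 0 := by
  refine TensorProduct.ext' fun ω f => ?_
  simp_rw [LinearMap.comp_apply, koszulDifferential_tmul, map_sum, koszulDifferential_tmul,
    LinearMap.zero_apply]
  refine Fintype.sum_sum_eq_zero_of_antisymm (fun i => ?_) (fun i j => ?_)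
  · rw [← mul_assoc, ι_sq_zero, zero_mul, zero_tmul]
  · rw [← mul_assoc, ι_mul_ι_anticomm, neg_mul, neg_tmul, mul_assoc, mul_left_comm (X j)]

theorem koszul_anticommutator_tmul (ω : ExteriorAlgebra R (σ → R)) (f : MvPolynomial σ R) :
    (koszulDifferential R σ ∘ₗ koszulHomotopy R σ +
        koszulHomotopy R σ ∘ₗ koszulDifferential R σ) (ω ⊗ₜ f) =
      Fintype.card σ • (ω ⊗ₜ f) + ω ⊗ₜ (∑ i, X i * pderiv i f) -
        numberOperator R σ ω ⊗ₜ f := by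
  have key : ∀ i j,
      (ι R (Pi.single i 1) * contractLeft (LinearMap.proj j) ω) ⊗ₜ[R] (X i * pderiv j f) +
        contractLeft (LinearMap.proj j) (ι R (Pi.single i 1) * ω) ⊗ₜ[R] pderiv j (X i * f) =
      if i = j then
        ω ⊗ₜ f + ω ⊗ₜ (X i * pderiv i f) -
          (ι R (Pi.single i 1) * contractLeft (LinearMap.proj i) ω) ⊗ₜ f
      else 0 := by
    intro i j
    simp only [contractLeft_ι_mul, pderiv_mul, pderiv_X, LinearMap.proj_apply]
    rcases eq_or_ne i j with rfl | hij
    · simp only [Pi.single_eq_same, one_smul, one_mul, if_true, sub_tmul, tmul_add]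
      abel
    · simp [hij, neg_tmul]
  rw [LinearMap.add_apply, LinearMap.comp_apply, LinearMap.comp_apply, koszulHomotopy_tmul,
    koszulDifferential_tmul, map_sum, map_sum]
  simp_rw [koszulDifferential_tmul, koszulHomotopy_tmul]
  rw [Finset.sum_comm, ← Finset.sum_add_distrib]
  simp_rw [← Finset.sum_add_distrib, key, Finset.sum_ite_eq, Finset.mem_univ, if_true,
    Finset.sum_sub_distrib, Finset.sum_add_distrib, ← tmul_sum, ← sum_tmul,
    numberOperator_apply, Finset.sum_const, Finset.card_univ]
  rw [tmul_smul]

theorem koszulSummand_le_eigenspace (p q : ℕ) :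
    koszulSummand R σ p q ≤
      eigenspace (koszulDifferential R σ ∘ₗ koszulHomotopy R σ +
        koszulHomotopy R σ ∘ₗ koszulDifferential R σ) (Fintype.card σ + q - p : R) := by
  refine Submodule.map₂_le.2 fun ω hω f hf => ?_
  rw [mem_eigenspace_iff, TensorProduct.mk_apply, koszul_anticommutator_tmul,
    ((mem_homogeneousSubmodule _ _).1 hf).sum_X_mul_pderiv, numberOperator_of_mem_exteriorPower hω]
  simp only [tmul_smul, ← smul_tmul', ← Nat.cast_smul_eq_nsmul R]
  module

end Koszul

section TopDegree

variable {k : Type*} [Field k] {n : ℕ}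

theorem koszulTau_eq : koszulTau k n = volumeForm k n ⊗ₜ 1 := by
  rw [koszulTau, volumeForm, ιMulti_apply]

theorem koszulDifferential_koszulTau : koszulDifferential k (Fin n) (koszulTau k n) = 0 := by
  rw [koszulTau, koszulDifferential_tmul]
  exact Finset.sum_eq_zero fun i _ => by
    rw [ι_mul_prod_list (fun j : Fin n => (Pi.single j 1 : Fin n → k)) i, zero_tmul]

theorem koszulSummand_le_span_koszulTau {p q : ℕ} (h : p = n + q) :
    koszulSummand k (Fin n) p q ≤ k ∙ koszulTau k n := by
  refine Submodule.map₂_le.2 fun ω hω f hf => ?_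
  rcases Nat.eq_zero_or_pos q with rfl | hq
  · rw [add_zero] at h
    rw [h, exteriorPower_top_eq_span_volumeForm] at hω
    obtain ⟨a, rfl⟩ := Submodule.mem_span_singleton.1 hω
    have hf : f = C (coeff 0 f) := totalDegree_eq_zero_iff_eq_C.1
      (Nat.le_zero.1 ((mem_homogeneousSubmodule _ _).1 hf).totalDegree_le)
    rw [hf, TensorProduct.mk_apply, ← mul_one (C _), C_mul', tmul_smul, ← smul_tmul',
      ← koszulTau_eq]
    exact Submodule.smul_mem _ _ (Submodule.smul_mem _ _ (Submodule.mem_span_singleton_self _))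
  · rw [exteriorPower_eq_bot_of_finrank_lt (by rw [Module.finrank_fin_fun]; omega)] at hω
    rw [(Submodule.mem_bot k).1 hω, TensorProduct.mk_apply, zero_tmul]
    exact Submodule.zero_mem _

end TopDegree

section Augmentation

variable (R : Type*) [CommRing R] (n : ℕ)

noncomputable def koszulAugmentation :
    ExteriorAlgebra R (Fin n → R) ⊗[R] MvPolynomial (Fin n) R →ₗ[R] R :=
  TensorProduct.lift ((LinearMap.mul R R).compl₁₂ (volumeCoeff R n) (aeval 0).toLinearMap)

variable {R n}

theorem koszulAugmentation_tmul (ω : ExteriorAlgebra R (Fin n → R))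
    (f : MvPolynomial (Fin n) R) :
    koszulAugmentation R n (ω ⊗ₜ f) = volumeCoeff R n ω * aeval 0 f :=
  rfl

theorem koszulAugmentation_comp_koszulDifferential :
    koszulAugmentation R n ∘ₗ koszulDifferential R (Fin n) = 0 :=
  TensorProduct.ext' fun ω f => by simp [koszulDifferential_tmul, koszulAugmentation_tmul]

theorem koszulAugmentation_koszulTau {k : Type*} [Field k] :
    koszulAugmentation k n (koszulTau k n) = 1 := by
  rw [koszulTau_eq, koszulAugmentation_tmul, volumeCoeff_volumeForm, map_one, one_mul]

theorem koszulTau_ne_zero {k : Type*} [Field k] : koszulTau k n ≠ 0 := fun h => by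
  simpa [h] using koszulAugmentation_koszulTau (k := k) (n := n)

theorem koszulTau_notMem_range_koszulDifferential {k : Type*} [Field k] :
    koszulTau k n ∉ LinearMap.range (koszulDifferential k (Fin n)) := fun ⟨y, hy⟩ => by
  have h := LinearMap.congr_fun (koszulAugmentation_comp_koszulDifferential (R := k) (n := n)) y
  rw [LinearMap.comp_apply, hy, koszulAugmentation_koszulTau] at h
  exact one_ne_zero h

end Augmentation

/-- For the `k`-linear operator `d` on `M = Λ(kⁿ) ⊗ k[X₁,…,Xₙ]` determined by
`d(ω ⊗ f) = ∑ᵢ (eᵢ ∧ ω) ⊗ (Xᵢ·f)` one has: (1) `d ∘ d = 0`; (2) `τ = (e₁∧⋯∧eₙ) ⊗ 1` lies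
in the kernel of `d`; (3) `τ` does not lie in the range of `d`; and (4) the kernel of `d`
is the internal direct sum of the range of `d` and the line `k·τ` (so the cohomology
`ker d / im d` is one-dimensional). -/
theorem koszul_semidensities (k : Type*) [Field k] [CharZero k] (n : ℕ)
    (d : (ExteriorAlgebra k (Fin n → k) ⊗[k] MvPolynomial (Fin n) k) →ₗ[k]
         (ExteriorAlgebra k (Fin n → k) ⊗[k] MvPolynomial (Fin n) k))
    (hd : ∀ (ω : ExteriorAlgebra k (Fin n → k)) (f : MvPolynomial (Fin n) k),
      d (ω ⊗ₜ f) = ∑ i, (ExteriorAlgebra.ι k (Pi.single i (1 : k)) * ω) ⊗ₜ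
        (MvPolynomial.X i * f)) :
    d ∘ₗ d = 0 ∧
    koszulTau k n ∈ LinearMap.ker d ∧
    koszulTau k n ∉ LinearMap.range d ∧
    LinearMap.ker d = LinearMap.range d ⊔ (k ∙ koszulTau k n) ∧
    Disjoint (LinearMap.range d) (k ∙ koszulTau k n) := by
  obtain rfl : d = koszulDifferential k (Fin n) :=
    TensorProduct.ext' fun ω f => by rw [hd, koszulDifferential_tmul]
  have hdd := koszulDifferential_comp_self (R := k) (σ := Fin n)
  have hker := LinearMap.ker_le_range_sup_of_homotopy hdd iSup_koszulSummand
    (fun pq => (n + pq.2 - pq.1 : k)) fun pq => by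
      have h := koszulSummand_le_eigenspace (R := k) (σ := Fin n) pq.1 pq.2
      rwa [Fintype.card_fin] at h
  have hzero : (⨆ (pq : ℕ × ℕ) (_ : (n + pq.2 - pq.1 : k) = 0),
      koszulSummand k (Fin n) pq.1 pq.2) ≤ k ∙ koszulTau k n :=
    iSup₂_le fun pq hpq =>
      koszulSummand_le_span_koszulTau (by exact_mod_cast (sub_eq_zero.1 hpq).symm)
  refine ⟨hdd, koszulDifferential_koszulTau, koszulTau_notMem_range_koszulDifferential,
    le_antisymm (hker.trans (sup_le_sup_left hzero _)) (sup_le (LinearMap.range_le_ker_iff.2 hdd)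
      ((Submodule.span_singleton_le_iff_mem _ _).2 koszulDifferential_koszulTau)),
    (Submodule.disjoint_span_singleton' koszulTau_ne_zero).2
      koszulTau_notMem_range_koszulDifferential⟩
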